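/- arXiv:1410.0334 — 4 statements merged into one kernel-verified Lean document; each statement's English description precedes it below -/
import Mathlib

section
/- (C-bound) Let ρ be a probability measure on a set H of voters with bounded measurable evaluations, and let P be a probability measure on X × {-1,+1} with X-marginal D. If the first moment of the ρ-margin μ₁ = ∫_{X×Y} y·(∫_H h(x) dρ(h)) dP(x,y) is strictly positive, then the risk of the ρ-weighted majority vote satisfies P[{(x,y) : y·∫_H h(x) dρ(h) ≤ 0}] ≤ 1 − μ₁² / μ₂, where μ₂ = ∫_{H×H} (∫_X h(x)h'(x) dD(x)) d(ρ⊗ρ)(h,h'). -/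
/-!
For every `t ≥ 0` one has `2 t M ≤ M² + t² · 1_{M > 0}` pointwise. Integrating and taking
`t = μ₁ / P(M > 0)` gives `μ₁² ≤ μ₂ · P(M > 0) = μ₂ · (1 - P(M ≤ 0))`, a form of
Cantelli's inequality. Applied to the margin `M(x, y) = y · ∫ h(x) dρ(h)`, it gives the
C-bound, because `y² = 1` and Fubini identify `∫∫ h(x) h'(x) dD d(ρ ⊗ ρ)` with `∫ M² dP`.
-/

open MeasureTheory

namespace MeasureTheory

variable {Ω : Type*} [MeasurableSpace Ω] {μ : Measure Ω} {M : Ω → ℝ}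

lemma two_mul_mul_integral_le_integral_sq_add_sq_mul_measureReal_pos [IsFiniteMeasure μ]
    (hM : Integrable M μ) (hM2 : Integrable (fun ω => M ω ^ 2) μ) {t : ℝ} (ht : 0 ≤ t) :
    2 * t * ∫ ω, M ω ∂μ ≤ ∫ ω, M ω ^ 2 ∂μ + t ^ 2 * μ.real {ω | 0 < M ω} := by
  have hpos : NullMeasurableSet {ω | 0 < M ω} μ :=
    nullMeasurableSet_lt aemeasurable_const hM.aemeasurable
  have hind : Integrable ({ω | 0 < M ω}.indicator fun _ => t ^ 2) μ :=
    (integrable_const _).indicator₀ hpos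
  -- if `M > 0` this is `(M - t)² ≥ 0`, otherwise `2tM ≤ 0 ≤ M²`
  have hpt : ∀ ω, 2 * t * M ω ≤ M ω ^ 2 + {ω | 0 < M ω}.indicator (fun _ => t ^ 2) ω := by
    intro ω
    by_cases h : 0 < M ω
    · rw [Set.indicator_of_mem (show ω ∈ {ω | 0 < M ω} from h)]
      nlinarith [sq_nonneg (M ω - t)]
    · rw [Set.indicator_of_notMem (show ω ∉ {ω | 0 < M ω} from h)]
      nlinarith
  calc 2 * t * ∫ ω, M ω ∂μ = ∫ ω, 2 * t * M ω ∂μ := (integral_const_mul _ _).symm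
    _ ≤ ∫ ω, (M ω ^ 2 + {ω | 0 < M ω}.indicator (fun _ => t ^ 2) ω) ∂μ :=
        integral_mono (hM.const_mul _) (hM2.add hind) hpt
    _ = ∫ ω, M ω ^ 2 ∂μ + t ^ 2 * μ.real {ω | 0 < M ω} := by
        rw [integral_add hM2 hind, integral_indicator₀ hpos, setIntegral_const, smul_eq_mul,
          mul_comm]

lemma sq_integral_le_integral_sq_mul_measureReal_pos [IsFiniteMeasure μ] (hM : Integrable M μ)
    (hM2 : Integrable (fun ω => M ω ^ 2) μ) (hM0 : 0 ≤ ∫ ω, M ω ∂μ) :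
    (∫ ω, M ω ∂μ) ^ 2 ≤ (∫ ω, M ω ^ 2 ∂μ) * μ.real {ω | 0 < M ω} := by
  set q := μ.real {ω | 0 < M ω}
  rcases (measureReal_nonneg : 0 ≤ q).eq_or_lt with hq | hq
  · have hle : ∀ᵐ ω ∂μ, M ω ≤ 0 := by
      rw [ae_iff]
      simpa [q, measureReal_eq_zero_iff] using hq.symm
    have hM_nonpos := integral_nonpos_of_ae hle
    have hM2_nonneg : 0 ≤ ∫ ω, M ω ^ 2 ∂μ := integral_nonneg fun ω => sq_nonneg _
    nlinarith
  · set t := (∫ ω, M ω ∂μ) / q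
    have htq : t * q = ∫ ω, M ω ∂μ := div_mul_cancel₀ _ hq.ne'
    have hquad := two_mul_mul_integral_le_integral_sq_add_sq_mul_measureReal_pos hM hM2
      (div_nonneg hM0 hq.le)
    nlinarith

lemma measureReal_nonpos_le_one_sub_sq_integral_div [IsProbabilityMeasure μ]
    (hM : Integrable M μ) (hM2 : Integrable (fun ω => M ω ^ 2) μ) (hM0 : 0 < ∫ ω, M ω ∂μ) :
    μ.real {ω | M ω ≤ 0} ≤ 1 - (∫ ω, M ω ∂μ) ^ 2 / ∫ ω, M ω ^ 2 ∂μ := by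
  have hsq := sq_integral_le_integral_sq_mul_measureReal_pos hM hM2 hM0.le
  have hq : 0 ≤ μ.real {ω | 0 < M ω} := measureReal_nonneg
  have hM2pos : 0 < ∫ ω, M ω ^ 2 ∂μ := by
    by_contra! h
    nlinarith [mul_nonpos_of_nonpos_of_nonneg h hq]
  have hcompl : {ω | M ω ≤ 0} = {ω | 0 < M ω}ᶜ := by ext; simp
  rw [hcompl, probReal_compl_eq_one_sub₀
    (nullMeasurableSet_lt aemeasurable_const hM.aemeasurable), sub_le_sub_iff_left,
    div_le_iff₀ hM2pos, mul_comm]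
  exact hsq

end MeasureTheory

lemma integral_prod_integral_mul_eq_integral_sq {X H : Type*} [MeasurableSpace X]
    [MeasurableSpace H] {ρ : Measure H} {D : Measure X}
    [IsFiniteMeasure ρ] [IsFiniteMeasure D] {f : H → X → ℝ} {C : ℝ}
    (hmeas : Measurable (fun p : H × X => f p.1 p.2)) (hbound : ∀ h x, |f h x| ≤ C) :
    ∫ q : H × H, (∫ x, f q.1 x * f q.2 x ∂D) ∂(ρ.prod ρ) = ∫ x, (∫ h, f h x ∂ρ) ^ 2 ∂D := by
  have hint : Integrable (fun z : (H × H) × X => f z.1.1 z.2 * f z.1.2 z.2)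
      ((ρ.prod ρ).prod D) := by
    refine .of_bound (by fun_prop) (C * C) (ae_of_all _ fun z => ?_)
    rw [Real.norm_eq_abs, abs_mul]
    exact mul_le_mul (hbound _ _) (hbound _ _) (abs_nonneg _)
      ((abs_nonneg _).trans (hbound z.1.1 z.2))
  rw [integral_integral_swap hint]
  congr 1 with x
  rw [integral_prod_mul (fun h => f h x) (fun h => f h x), sq]

/-- The C-bound: if the first moment of the ρ-margin is strictly positive, then the
risk of the ρ-weighted majority vote is at most `1 - μ₁² / μ₂`. -/
theorem c_bound
    {X H : Type*} [MeasurableSpace X] [MeasurableSpace H]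
    (P : Measure (X × ℝ)) [IsProbabilityMeasure P]
    (D : Measure X) (hD : P.map Prod.fst = D)
    (ρ : Measure H) [IsProbabilityMeasure ρ]
    (f : H → X → ℝ)
    (hmeas : Measurable (fun p : H × X => f p.1 p.2))
    (hbound : ∀ h x, |f h x| ≤ 1)
    (hY : ∀ᵐ p ∂P, p.2 = 1 ∨ p.2 = -1)
    (hpos : 0 < ∫ p, p.2 * ∫ h, f h p.1 ∂ρ ∂P) :
    (P {p : X × ℝ | p.2 * ∫ h, f h p.1 ∂ρ ≤ 0}).toReal ≤
      1 - (∫ p, p.2 * ∫ h, f h p.1 ∂ρ ∂P) ^ 2 /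
        (∫ q : H × H, (∫ x, f q.1 x * f q.2 x ∂D) ∂(ρ.prod ρ)) := by
  subst hD
  set g : X → ℝ := fun x => ∫ h, f h x ∂ρ
  have hg_meas : Measurable g :=
    (hmeas.comp measurable_swap).stronglyMeasurable.integral_prod_right'.measurable
  have hg_le : ∀ x, |g x| ≤ 1 := fun x => by
    simpa using norm_integral_le_of_norm_le_const (μ := ρ) (f := (f · x)) (C := 1)
      (ae_of_all _ (hbound · x))
  have hmargin_meas : Measurable fun p : X × ℝ => p.2 * g p.1 := by fun_prop
  have hmargin_le : ∀ᵐ p ∂P, ‖p.2 * g p.1‖ ≤ 1 := by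
    filter_upwards [hY] with p hp
    rcases hp with h | h <;> simp [h, hg_le]
  have hmargin_sq_le : ∀ᵐ p ∂P, ‖(p.2 * g p.1) ^ 2‖ ≤ 1 := by
    filter_upwards [hmargin_le] with p hp
    rw [norm_pow]
    exact pow_le_one₀ (norm_nonneg _) hp
  have hμ₂ : ∫ q : H × H, (∫ x, f q.1 x * f q.2 x ∂(P.map Prod.fst)) ∂(ρ.prod ρ) =
      ∫ p, (p.2 * g p.1) ^ 2 ∂P := by
    rw [integral_prod_integral_mul_eq_integral_sq hmeas hbound,
      integral_map measurable_fst.aemeasurable (hg_meas.pow_const 2).aestronglyMeasurable]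
    refine integral_congr_ae ?_
    filter_upwards [hY] with p hp
    rcases hp with h | h <;> simp [h]
  rw [hμ₂]
  exact measureReal_nonpos_le_one_sub_sq_integral_div
    (.of_bound hmargin_meas.aestronglyMeasurable 1 hmargin_le)
    (.of_bound (hmargin_meas.pow_const 2).aestronglyMeasurable 1 hmargin_sq_le) hpos
end

section
/- (Gibbs risk decomposition) Let ρ be a probability measure on a set H of voters with bounded measurable evaluations and let P be a probability measure on X × {-1,+1} with X-marginal D. Define the expected joint error e_P(ρ) = ∫_{X×Y} ∫_{H×H} (1/4)(1 − y·h(x))(1 − y·h'(x)) d(ρ⊗ρ)(h,h') dP(x,y) and the expected disagreement d_D(ρ) = ∫_X ∫_{H×H} (1/2)(1 − h(x)h'(x)) d(ρ⊗ρ)(h,h') dD(x). Then the Gibbs risk satisfies R_P(G_ρ) = (1/2) d_D(ρ) + e_P(ρ), where R_P(G_ρ) = (1/2)(1 − ∫_{X×Y} y·(∫_H h(x) dρ(h)) dP(x,y)). -/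
/-!
Two voters drawn independently from `ρ` make every inner integral over `ρ ⊗ ρ` split into a
product of single integrals: with `m x = ∫ h x ∂ρ` the average vote, the disagreement at `x` is
`(1 - m x ^ 2) / 2` and the joint error at `(x, y)` is `(1 - y * m x) ^ 2 / 4`. Since `y ^ 2 = 1`,
the margin `z = y * m x` has `z ^ 2 = m x ^ 2`, and the theorem is the `P`-average of the
identity `(1 - z) / 2 = (1 - z ^ 2) / 4 + (1 - z) ^ 2 / 4`.
-/

open MeasureTheory

section PairOfVoters

variable {H : Type*} [MeasurableSpace H] (ρ : Measure H) [IsProbabilityMeasure ρ]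

lemma integral_one_sub_const_mul {u : H → ℝ} (hu : Integrable u ρ) (y : ℝ) :
    ∫ h, (1 - y * u h) ∂ρ = 1 - y * ∫ h, u h ∂ρ := by
  rw [integral_sub (integrable_const 1) (hu.const_mul y), integral_const_mul, integral_const,
    probReal_univ, one_smul]

lemma integral_disagreement_prod {u : H → ℝ} (hu : Integrable u ρ) :
    ∫ q : H × H, (1 / 2) * (1 - u q.1 * u q.2) ∂(ρ.prod ρ) =
      (1 / 2) * (1 - (∫ h, u h ∂ρ) ^ 2) := by
  rw [integral_const_mul, integral_sub (integrable_const 1) (hu.mul_prod hu), integral_const,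
    probReal_univ, one_smul, integral_prod_mul, sq]

lemma integral_joint_error_prod {u : H → ℝ} (hu : Integrable u ρ) (y : ℝ) :
    ∫ q : H × H, (1 / 4) * (1 - y * u q.1) * (1 - y * u q.2) ∂(ρ.prod ρ) =
      (1 / 4) * (1 - y * ∫ h, u h ∂ρ) ^ 2 := by
  simp_rw [mul_assoc (1 / 4 : ℝ)]
  rw [integral_const_mul, integral_prod_mul (fun h => 1 - y * u h) (fun h => 1 - y * u h),
    integral_one_sub_const_mul ρ hu, sq]

end PairOfVoters

lemma half_one_sub_integral_eq {Ω : Type*} [MeasurableSpace Ω] (μ : Measure Ω)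
    [IsProbabilityMeasure μ] {Z : Ω → ℝ} (hZ : MemLp Z 2 μ) :
    (1 / 2) * (1 - ∫ ω, Z ω ∂μ) =
      (1 / 2) * ∫ ω, (1 / 2) * (1 - Z ω ^ 2) ∂μ +
        ∫ ω, (1 / 4) * (1 - Z ω) ^ 2 ∂μ := by
  have hZ_int : Integrable Z μ := hZ.integrable one_le_two
  have hsq_int : Integrable (fun ω => (1 / 2 : ℝ) * (1 / 2 * (1 - Z ω ^ 2))) μ :=
    ((integrable_const 1).sub hZ.integrable_sq).const_mul _ |>.const_mul _
  have hsub_int : Integrable (fun ω => (1 / 4 : ℝ) * (1 - Z ω) ^ 2) μ :=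
    ((memLp_const 1).sub hZ).integrable_sq.const_mul _
  calc (1 / 2) * (1 - ∫ ω, Z ω ∂μ)
      = ∫ ω, (1 / 2) * (1 - Z ω) ∂μ := by
        rw [integral_const_mul, integral_sub (integrable_const 1) hZ_int, integral_const,
          probReal_univ, one_smul]
    _ = ∫ ω, ((1 / 2) * ((1 / 2) * (1 - Z ω ^ 2)) + (1 / 4) * (1 - Z ω) ^ 2) ∂μ :=
        integral_congr_ae (Filter.Eventually.of_forall fun ω => by ring)
    _ = _ := by rw [integral_add hsq_int hsub_int, integral_const_mul]

/-- Gibbs risk decomposition: `R_P(G_ρ) = (1/2) d_D(ρ) + e_P(ρ)`, where `e_P(ρ)` is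
the expected joint error and `d_D(ρ)` the expected disagreement of two voters. -/
theorem gibbs_risk_decomposition
    {X H : Type*} [MeasurableSpace X] [MeasurableSpace H]
    (P : Measure (X × ℝ)) [IsProbabilityMeasure P]
    (D : Measure X) (hD : P.map Prod.fst = D)
    (ρ : Measure H) [IsProbabilityMeasure ρ]
    (f : H → X → ℝ)
    (hmeas : Measurable (fun p : H × X => f p.1 p.2))
    (hbound : ∀ h x, |f h x| ≤ 1)
    (hY : ∀ᵐ p ∂P, p.2 = 1 ∨ p.2 = -1) :
    (1 / 2) * (1 - ∫ p, p.2 * ∫ h, f h p.1 ∂ρ ∂P) =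
      (1 / 2) * (∫ x, ∫ q : H × H, (1 / 2) * (1 - f q.1 x * f q.2 x) ∂(ρ.prod ρ) ∂D) +
        ∫ p, ∫ q : H × H,
          (1 / 4) * (1 - p.2 * f q.1 p.1) * (1 - p.2 * f q.2 p.1) ∂(ρ.prod ρ) ∂P := by
  have hvote_int (x : X) : Integrable (fun h => f h x) ρ :=
    .of_bound (by fun_prop) 1 (.of_forall fun h => (Real.norm_eq_abs _).trans_le (hbound h x))
  simp_rw [integral_disagreement_prod ρ (hvote_int _), integral_joint_error_prod ρ (hvote_int _)]
  have hvote_meas : Measurable fun x => ∫ h, f h x ∂ρ :=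
    (hmeas.comp measurable_swap).stronglyMeasurable.integral_prod_right'.measurable
  have hvote_le (x : X) : |∫ h, f h x ∂ρ| ≤ 1 := by
    simpa using norm_integral_le_of_norm_le_const (μ := ρ) (f := fun h => f h x)
      (.of_forall fun h => (Real.norm_eq_abs _).trans_le (hbound h x))
  have hmargin : MemLp (fun p : X × ℝ => p.2 * ∫ h, f h p.1 ∂ρ) 2 P := by
    refine .of_bound
      (measurable_snd.mul (hvote_meas.comp measurable_fst)).aestronglyMeasurable 1 ?_
    filter_upwards [hY] with p hp
    rcases hp with hp | hp <;> simp [hp, hvote_le]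
  rw [← hD, integral_map (f := fun x => (1 / 2 : ℝ) * (1 - (∫ h, f h x ∂ρ) ^ 2))
    measurable_fst.aemeasurable
    ((measurable_const.sub (hvote_meas.pow_const 2)).const_mul _).aestronglyMeasurable,
    half_one_sub_integral_eq P hmargin]
  congr 2
  refine integral_congr_ae ?_
  filter_upwards [hY] with p hp
  rcases hp with hp | hp <;> simp [hp]
end

section
/- (PAC-Bayesian domain adaptation bound) Let ρ be a probability measure on a set H of voters with bounded measurable evaluations, let P_S and P_T be probability measures on X × {-1,+1} with X-marginals D_S and D_T. Define the domain disagreement dis_ρ(D_S, D_T) = |∫_{H×H} (∫_X h(x)h'(x) dD_T(x) − ∫_X h(x)h'(x) dD_S(x)) d(ρ⊗ρ)(h,h')| and λ_ρ = |e_{P_T}(ρ) − e_{P_S}(ρ)|, where e_P(ρ) = ∫_{X×Y} ∫_{H×H} (1/4)(1 − y·h(x))(1 − y·h'(x)) d(ρ⊗ρ)(h,h') dP(x,y). Then the target Gibbs risk satisfies R_{P_T}(G_ρ) ≤ R_{P_S}(G_ρ) + dis_ρ(D_S, D_T) + λ_ρ. -/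
open MeasureTheory

set_option linter.unusedSectionVars false

section Aux

variable {X H : Type*} [MeasurableSpace X] [MeasurableSpace H]

/-- Pointwise boundedness and measurability give integrability on a finite measure. -/
private lemma integrable_of_bdd {α : Type*} [MeasurableSpace α] {μ : Measure α}
    [IsFiniteMeasure μ] {g : α → ℝ} (hg : AEStronglyMeasurable g μ)
    (hb : ∀ᵐ a ∂μ, |g a| ≤ 1) : Integrable g μ :=
  ⟨hg, HasFiniteIntegral.of_bounded (C := 1) (by simpa [Real.norm_eq_abs] using hb)⟩

private lemma mean_abs_le (ρ : Measure H) [IsProbabilityMeasure ρ]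
    (f : H → X → ℝ) (hbound : ∀ h x, |f h x| ≤ 1) (x : X) :
    |∫ h, f h x ∂ρ| ≤ 1 := by
  have := norm_integral_le_of_norm_le_const (μ := ρ) (f := fun h => f h x) (C := 1)
    (Filter.Eventually.of_forall fun h => by simpa [Real.norm_eq_abs] using hbound h x)
  simpa [Real.norm_eq_abs] using this

/-- Decomposition of the Gibbs risk. -/
private lemma gibbs_decomp (P : Measure (X × ℝ)) [IsProbabilityMeasure P]
    (ρ : Measure H) [IsProbabilityMeasure ρ]
    (f : H → X → ℝ) (hmeas : Measurable (fun p : H × X => f p.1 p.2))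
    (hbound : ∀ h x, |f h x| ≤ 1)
    (hY : ∀ᵐ p ∂P, p.2 = 1 ∨ p.2 = -1) :
    (1 / 2) * (1 - ∫ p, p.2 * ∫ h, f h p.1 ∂ρ ∂P) =
      (∫ p, ∫ q : H × H, (1 / 4) * (1 - p.2 * f q.1 p.1) * (1 - p.2 * f q.2 p.1)
          ∂(ρ.prod ρ) ∂P) + 1 / 4 -
        (1 / 4) * ∫ x, (∫ h, f h x ∂ρ) ^ 2 ∂(P.map Prod.fst) := by
  set m : X → ℝ := fun x => ∫ h, f h x ∂ρ with hm
  have hfmx : ∀ x : X, Measurable fun h => f h x := fun x =>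
    hmeas.comp (measurable_id.prodMk measurable_const)
  have hfint : ∀ x : X, Integrable (fun h => f h x) ρ := fun x =>
    integrable_of_bdd (hfmx x).aestronglyMeasurable
      (Filter.Eventually.of_forall fun h => hbound h x)
  have hmm : Measurable m := hmeas.stronglyMeasurable.integral_prod_left'.measurable
  have hmb : ∀ x, |m x| ≤ 1 := mean_abs_le ρ f hbound
  -- inner integral computation
  have hinner : ∀ p : X × ℝ,
      (∫ q : H × H, (1 / 4) * (1 - p.2 * f q.1 p.1) * (1 - p.2 * f q.2 p.1) ∂(ρ.prod ρ))
        = ((1 / 2) * (1 - p.2 * m p.1)) ^ 2 := by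
    intro p
    have h1 : (fun q : H × H => (1 / 4) * (1 - p.2 * f q.1 p.1) * (1 - p.2 * f q.2 p.1)) =
        fun q : H × H => ((fun h => (1 / 2) * (1 - p.2 * f h p.1)) q.1) *
          ((fun h => (1 / 2) * (1 - p.2 * f h p.1)) q.2) := by
      funext q; ring
    have h2 : ∫ h, (1 / 2) * (1 - p.2 * f h p.1) ∂ρ = (1 / 2) * (1 - p.2 * m p.1) := by
      rw [integral_const_mul, integral_sub (integrable_const _) ((hfint p.1).const_mul _),
        integral_const_mul, integral_const]
      simp [hm]
    have h3 := integral_prod_mul (μ := ρ) (ν := ρ)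
      (f := fun h => (1 / 2) * (1 - p.2 * f h p.1)) (g := fun h => (1 / 2) * (1 - p.2 * f h p.1))
    rw [h1]
    exact h3.trans (by rw [h2]; ring)
  have hstep1 :
      (∫ p, ∫ q : H × H, (1 / 4) * (1 - p.2 * f q.1 p.1) * (1 - p.2 * f q.2 p.1)
          ∂(ρ.prod ρ) ∂P)
        = ∫ p, ((1 / 2) * (1 - p.2 * m p.1)) ^ 2 ∂P :=
    integral_congr_ae (Filter.Eventually.of_forall hinner)
  -- a.e. identity using y = ±1
  have hae : ∀ᵐ p ∂P, ((1 / 2) * (1 - p.2 * m p.1)) ^ 2 =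
      (1 / 2) * (1 - p.2 * m p.1) - 1 / 4 + (1 / 4) * (m p.1) ^ 2 := by
    filter_upwards [hY] with p hp
    rcases hp with h | h <;> rw [h] <;> ring
  -- integrabilities
  have hmy : Integrable (fun p : X × ℝ => p.2 * m p.1) P := by
    refine integrable_of_bdd ((measurable_snd.mul (hmm.comp measurable_fst)).aestronglyMeasurable) ?_
    filter_upwards [hY] with p hp
    rcases hp with h | h <;> rw [h] <;> simpa using hmb p.1
  have hm2 : Integrable (fun p : X × ℝ => (m p.1) ^ 2) P := by
    refine integrable_of_bdd (((hmm.comp measurable_fst).pow_const 2).aestronglyMeasurable) ?_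
    refine Filter.Eventually.of_forall fun p => ?_
    rw [abs_pow]
    exact pow_le_one₀ (abs_nonneg _) (hmb p.1)
  have hg1 : Integrable (fun p : X × ℝ => (1 / 2) * (1 - p.2 * m p.1)) P := by
    have : Integrable (fun p : X × ℝ => (1 : ℝ) - p.2 * m p.1) P :=
      (integrable_const (1 : ℝ)).sub hmy
    exact this.const_mul _
  have hstep2 : ∫ p, ((1 / 2) * (1 - p.2 * m p.1)) ^ 2 ∂P =
      ∫ p, ((1 / 2) * (1 - p.2 * m p.1) - 1 / 4 + (1 / 4) * (m p.1) ^ 2) ∂P :=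
    integral_congr_ae hae
  have hstep3 : ∫ p, ((1 / 2) * (1 - p.2 * m p.1) - 1 / 4 + (1 / 4) * (m p.1) ^ 2) ∂P =
      (1 / 2) * (1 - ∫ p, p.2 * m p.1 ∂P) - 1 / 4 + (1 / 4) * ∫ p, (m p.1) ^ 2 ∂P := by
    have hint1 : Integrable (fun p : X × ℝ => (1 / 2) * (1 - p.2 * m p.1) - 1 / 4) P :=
      hg1.sub (integrable_const _)
    have hint2 : Integrable (fun p : X × ℝ => (1 / 4) * (m p.1) ^ 2) P :=
      hm2.const_mul _
    rw [integral_add hint1 hint2,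
      integral_sub hg1 (integrable_const _), integral_const_mul,
      integral_sub (integrable_const _) hmy, integral_const, integral_const_mul,
      integral_const]
    simp
  have hmap : ∫ x, (m x) ^ 2 ∂(P.map Prod.fst) = ∫ p, (m p.1) ^ 2 ∂P :=
    integral_map measurable_fst.aemeasurable (hmm.pow_const 2).aestronglyMeasurable
  rw [hstep1, hstep2, hstep3, hmap]
  ring

/-- Fubini step for the disagreement term. -/
private lemma swap_lemma (D : Measure X) [IsProbabilityMeasure D]
    (ρ : Measure H) [IsProbabilityMeasure ρ]
    (f : H → X → ℝ) (hmeas : Measurable (fun p : H × X => f p.1 p.2))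
    (hbound : ∀ h x, |f h x| ≤ 1) :
    ∫ q : H × H, ∫ x, f q.1 x * f q.2 x ∂D ∂(ρ.prod ρ)
      = ∫ x, (∫ h, f h x ∂ρ) ^ 2 ∂D := by
  have hFm : Measurable (fun z : (H × H) × X => f z.1.1 z.2 * f z.1.2 z.2) :=
    (hmeas.comp ((measurable_fst.fst).prodMk measurable_snd)).mul
      (hmeas.comp ((measurable_fst.snd).prodMk measurable_snd))
  have hFint : Integrable (Function.uncurry fun (q : H × H) (x : X) =>
      f q.1 x * f q.2 x) ((ρ.prod ρ).prod D) := by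
    refine ⟨hFm.aestronglyMeasurable, HasFiniteIntegral.of_bounded (C := 1)
      (Filter.Eventually.of_forall fun z => ?_)⟩
    show ‖f z.1.1 z.2 * f z.1.2 z.2‖ ≤ 1
    rw [Real.norm_eq_abs, abs_mul]
    exact mul_le_one₀ (hbound _ _) (abs_nonneg _) (hbound _ _)
  have hswap := integral_integral_swap
    (f := fun (q : H × H) (x : X) => f q.1 x * f q.2 x) hFint
  rw [hswap]
  refine integral_congr_ae (Filter.Eventually.of_forall fun x => ?_)
  show ∫ q : H × H, f q.1 x * f q.2 x ∂(ρ.prod ρ) = (∫ h, f h x ∂ρ) ^ 2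
  have h3 := integral_prod_mul (μ := ρ) (ν := ρ)
    (f := fun h => f h x) (g := fun h => f h x)
  rw [sq]
  exact h3

end Aux

/-- PAC-Bayesian domain adaptation bound: the target Gibbs risk is bounded by the
source Gibbs risk plus the domain disagreement plus the deviation `λ_ρ` of the
expected joint errors. -/
theorem pac_bayes_domain_adaptation_bound
    {X H : Type*} [MeasurableSpace X] [MeasurableSpace H]
    (PS PT : Measure (X × ℝ)) [IsProbabilityMeasure PS] [IsProbabilityMeasure PT]
    (DS DT : Measure X) (hDS : PS.map Prod.fst = DS) (hDT : PT.map Prod.fst = DT)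
    (ρ : Measure H) [IsProbabilityMeasure ρ]
    (f : H → X → ℝ)
    (hmeas : Measurable (fun p : H × X => f p.1 p.2))
    (hbound : ∀ h x, |f h x| ≤ 1)
    (hYS : ∀ᵐ p ∂PS, p.2 = 1 ∨ p.2 = -1)
    (hYT : ∀ᵐ p ∂PT, p.2 = 1 ∨ p.2 = -1) :
    (1 / 2) * (1 - ∫ p, p.2 * ∫ h, f h p.1 ∂ρ ∂PT) ≤
      (1 / 2) * (1 - ∫ p, p.2 * ∫ h, f h p.1 ∂ρ ∂PS) +
      |∫ q : H × H, ((∫ x, f q.1 x * f q.2 x ∂DT) - ∫ x, f q.1 x * f q.2 x ∂DS)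
          ∂(ρ.prod ρ)| +
      |(∫ p, ∫ q : H × H,
            (1 / 4) * (1 - p.2 * f q.1 p.1) * (1 - p.2 * f q.2 p.1) ∂(ρ.prod ρ) ∂PT) -
        ∫ p, ∫ q : H × H,
            (1 / 4) * (1 - p.2 * f q.1 p.1) * (1 - p.2 * f q.2 p.1) ∂(ρ.prod ρ) ∂PS| := by
  subst hDS hDT
  haveI : IsProbabilityMeasure (PS.map Prod.fst) :=
    Measure.isProbabilityMeasure_map measurable_fst.aemeasurable
  haveI : IsProbabilityMeasure (PT.map Prod.fst) :=
    Measure.isProbabilityMeasure_map measurable_fst.aemeasurable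
  have hT := gibbs_decomp PT ρ f hmeas hbound hYT
  have hS := gibbs_decomp PS ρ f hmeas hbound hYS
  set IT : ℝ := ∫ x, (∫ h, f h x ∂ρ) ^ 2 ∂(PT.map Prod.fst) with hIT
  set IS : ℝ := ∫ x, (∫ h, f h x ∂ρ) ^ 2 ∂(PS.map Prod.fst) with hIS
  -- integrability of the per-pair expected products
  have hqm : ∀ (D : Measure X) [IsProbabilityMeasure D],
      Integrable (fun q : H × H => ∫ x, f q.1 x * f q.2 x ∂D) (ρ.prod ρ) := by
    intro D _
    have hFm : Measurable (fun z : (H × H) × X => f z.1.1 z.2 * f z.1.2 z.2) :=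
      (hmeas.comp ((measurable_fst.fst).prodMk measurable_snd)).mul
        (hmeas.comp ((measurable_fst.snd).prodMk measurable_snd))
    refine integrable_of_bdd hFm.stronglyMeasurable.integral_prod_right'.measurable.aestronglyMeasurable
      (Filter.Eventually.of_forall fun q => ?_)
    have := norm_integral_le_of_norm_le_const (μ := D) (f := fun x => f q.1 x * f q.2 x)
      (C := 1) (Filter.Eventually.of_forall fun x => by
        rw [Real.norm_eq_abs, abs_mul]
        exact mul_le_one₀ (hbound _ _) (abs_nonneg _) (hbound _ _))
    simpa [Real.norm_eq_abs] using this
  have hA : |∫ q : H × H, ((∫ x, f q.1 x * f q.2 x ∂(PT.map Prod.fst)) -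
      ∫ x, f q.1 x * f q.2 x ∂(PS.map Prod.fst)) ∂(ρ.prod ρ)| = |IT - IS| := by
    rw [integral_sub (hqm _) (hqm _), swap_lemma _ ρ f hmeas hbound,
      swap_lemma _ ρ f hmeas hbound]
  rw [hT, hS, hA]
  have h1 := neg_le_abs (IT - IS)
  have h2 := abs_nonneg (IT - IS)
  have h3 := le_abs_self
    ((∫ p, ∫ q : H × H,
        (1 / 4) * (1 - p.2 * f q.1 p.1) * (1 - p.2 * f q.2 p.1) ∂(ρ.prod ρ) ∂PT) -
      ∫ p, ∫ q : H × H,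
        (1 / 4) * (1 - p.2 * f q.1 p.1) * (1 - p.2 * f q.2 p.1) ∂(ρ.prod ρ) ∂PS)
  linarith
end

section
/- Let ρ be a probability measure on a set H of voters with measurable evaluations satisfying |h(x)| ≤ 1 for all x, let ε ≥ 0, and let (x_t^1, x_s^1), …, (x_t^m, x_s^m) be a finite nonempty family of matched pairs such that for each i and ρ-almost every h, |h(x_s^i) − h(x_t^i)| ≤ ε. Define the empirical domain disagreement dis_ρ(Ŝ, T̂) = |(1/m)∑_{i=1}^m ∫_{H×H} (h(x_s^i)h'(x_s^i) − h(x_t^i)h'(x_t^i)) d(ρ⊗ρ)(h,h')|. Then dis_ρ(Ŝ, T̂) ≤ ε² + 2ε·(1/m)∑_{i=1}^m ∫_H |h(x_t^i)| dρ(h), and in particular dis_ρ(Ŝ, T̂) ≤ ε(ε + 2). -/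
open MeasureTheory

/-- The empirical domain disagreement between the matched source sample and the
self-labeled target sample is bounded by `ε² + 2ε` times the average confidence of the
voters on the target points, and in particular by `ε(ε + 2)`. -/
theorem empirical_domain_disagreement_bound
    {X H : Type*} [MeasurableSpace X] [MeasurableSpace H]
    (ρ : Measure H) [IsProbabilityMeasure ρ]
    (f : H → X → ℝ)
    (hmeas : Measurable (fun p : H × X => f p.1 p.2))
    (hbound : ∀ h x, |f h x| ≤ 1)
    (ε : ℝ) (hε : 0 ≤ ε)
    (m : ℕ) (hm : 0 < m)
    (xt xs : Fin m → X)
    (hclose : ∀ i, ∀ᵐ h ∂ρ, |f h (xs i) - f h (xt i)| ≤ ε) :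
    |(1 / (m : ℝ)) * ∑ i, ∫ q : H × H,
        (f q.1 (xs i) * f q.2 (xs i) - f q.1 (xt i) * f q.2 (xt i)) ∂(ρ.prod ρ)| ≤
      ε ^ 2 + 2 * ε * ((1 / (m : ℝ)) * ∑ i, ∫ h, |f h (xt i)| ∂ρ) ∧
    |(1 / (m : ℝ)) * ∑ i, ∫ q : H × H,
        (f q.1 (xs i) * f q.2 (xs i) - f q.1 (xt i) * f q.2 (xt i)) ∂(ρ.prod ρ)| ≤
      ε * (ε + 2) := by
  have hmeas' : ∀ x : X, Measurable (fun h => f h x) := fun x =>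
    hmeas.comp (measurable_id.prodMk measurable_const)
  have hint : ∀ x : X, Integrable (fun h => f h x) ρ := fun x => by
    refine (integrable_const (1:ℝ)).mono' (hmeas' x).aestronglyMeasurable ?_
    exact Filter.Eventually.of_forall fun h => by simpa using hbound h x
  set a : Fin m → ℝ := fun i => ∫ h, f h (xs i) ∂ρ with ha
  set b : Fin m → ℝ := fun i => ∫ h, f h (xt i) ∂ρ with hb
  set B : Fin m → ℝ := fun i => ∫ h, |f h (xt i)| ∂ρ with hB
  have hprod : ∀ i, (∫ q : H × H,
      (f q.1 (xs i) * f q.2 (xs i) - f q.1 (xt i) * f q.2 (xt i)) ∂(ρ.prod ρ))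
      = a i ^ 2 - b i ^ 2 := by
    intro i
    have h1 : Integrable (fun q : H × H => f q.1 (xs i) * f q.2 (xs i)) (ρ.prod ρ) :=
      (hint (xs i)).mul_prod (hint (xs i))
    have h2 : Integrable (fun q : H × H => f q.1 (xt i) * f q.2 (xt i)) (ρ.prod ρ) :=
      (hint (xt i)).mul_prod (hint (xt i))
    have e1 := integral_prod_mul (μ := ρ) (ν := ρ) (fun h => f h (xs i)) (fun h => f h (xs i))
    have e2 := integral_prod_mul (μ := ρ) (ν := ρ) (fun h => f h (xt i)) (fun h => f h (xt i))
    rw [integral_sub h1 h2, e1, e2]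
    ring
  have habs_b : ∀ i, |b i| ≤ B i := fun i => by
    simpa [Real.norm_eq_abs] using norm_integral_le_integral_norm (μ := ρ) (fun h => f h (xt i))
  have hB1 : ∀ i, B i ≤ 1 := by
    intro i
    calc B i ≤ ∫ _ : H, (1:ℝ) ∂ρ := by
          refine integral_mono ((hint (xt i)).abs) (integrable_const 1) ?_
          exact fun h => hbound h (xt i)
      _ = 1 := by simp
  have hab : ∀ i, |a i - b i| ≤ ε := by
    intro i
    have := integral_sub (hint (xs i)) (hint (xt i))
    rw [ha, hb]
    simp only
    rw [← this]
    calc |∫ h, (f h (xs i) - f h (xt i)) ∂ρ|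
        ≤ ∫ h, |f h (xs i) - f h (xt i)| ∂ρ := by
          simpa [Real.norm_eq_abs] using
            norm_integral_le_integral_norm (μ := ρ) (fun h => f h (xs i) - f h (xt i))
      _ ≤ ∫ _ : H, ε ∂ρ := by
          refine integral_mono_ae ((hint (xs i)).sub (hint (xt i))).abs (integrable_const ε) ?_
          exact hclose i
      _ = ε := by simp
  have key : ∀ i, |a i ^ 2 - b i ^ 2| ≤ ε ^ 2 + 2 * ε * B i := by
    intro i
    have h1 : a i ^ 2 - b i ^ 2 = (a i - b i) ^ 2 + 2 * b i * (a i - b i) := by ring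
    calc |a i ^ 2 - b i ^ 2| ≤ |(a i - b i) ^ 2| + |2 * b i * (a i - b i)| := by
          rw [h1]; exact abs_add_le _ _
      _ = |a i - b i| ^ 2 + 2 * |b i| * |a i - b i| := by
          rw [abs_mul, abs_mul, sq_abs]; simp [abs_of_nonneg]
      _ ≤ ε ^ 2 + 2 * ε * B i := by
          have h2 := hab i
          have h3 := habs_b i
          have h4 : (0:ℝ) ≤ |a i - b i| := abs_nonneg _
          have h5 : (0:ℝ) ≤ |b i| := abs_nonneg _
          nlinarith
  have hmpos : (0:ℝ) < m := by exact_mod_cast hm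
  have main : |(1 / (m : ℝ)) * ∑ i, ∫ q : H × H,
        (f q.1 (xs i) * f q.2 (xs i) - f q.1 (xt i) * f q.2 (xt i)) ∂(ρ.prod ρ)| ≤
      ε ^ 2 + 2 * ε * ((1 / (m : ℝ)) * ∑ i, B i) := by
    simp only [hprod]
    rw [abs_mul, abs_of_nonneg (by positivity : (0:ℝ) ≤ 1 / (m:ℝ))]
    calc (1 / (m:ℝ)) * |∑ i, (a i ^ 2 - b i ^ 2)|
        ≤ (1 / (m:ℝ)) * ∑ i, |a i ^ 2 - b i ^ 2| := by
          gcongr; exact Finset.abs_sum_le_sum_abs _ _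
      _ ≤ (1 / (m:ℝ)) * ∑ i, (ε ^ 2 + 2 * ε * B i) := by
          gcongr with i; exact key i
      _ = ε ^ 2 + 2 * ε * ((1 / (m:ℝ)) * ∑ i, B i) := by
          rw [Finset.sum_add_distrib, Finset.sum_const, ← Finset.mul_sum]
          simp only [Finset.card_univ, Fintype.card_fin, nsmul_eq_mul]
          field_simp
  refine ⟨main, main.trans ?_⟩
  have hBavg : (1 / (m:ℝ)) * ∑ i, B i ≤ 1 := by
    calc (1 / (m:ℝ)) * ∑ i, B i ≤ (1 / (m:ℝ)) * ∑ _i : Fin m, (1:ℝ) := by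
          gcongr with i; exact hB1 i
      _ = 1 := by
          simp only [Finset.sum_const, Finset.card_univ, Fintype.card_fin, nsmul_eq_mul, mul_one]
          field_simp
  nlinarith [hBavg]
end
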